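/- arXiv:2201.09093 — 2 statements merged into one kernel-verified Lean document; each statement's English description precedes it below -/
import Mathlib

section
/- For integers n, m ≥ 3, λ_2(→C_n □ ↔C_m) = 3, where →C_n is the directed cycle on n vertices and ↔C_m is the complete biorientation of the cycle on m vertices. -/
/-- The set of arcs of a digraph. -/
def Digraph.ArcSet {V : Type*} (D : Digraph V) : Set (V × V) := {p | D.Adj p.1 p.2}

/-- Delete a set of arcs from a digraph. -/
def Digraph.DeleteArcs {V : Type*} (D : Digraph V) (F : Set (V × V)) : Digraph V :=
  ⟨fun u v => D.Adj u v ∧ (u, v) ∉ F⟩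

/-- A digraph is strong if every vertex can reach every other vertex by a directed walk. -/
def Digraph.IsStrong {V : Type*} (D : Digraph V) : Prop :=
  ∀ u v : V, Relation.ReflTransGen D.Adj u v

/-- The arc-strong connectivity: the minimum number of arcs whose removal
destroys strong connectivity. -/
noncomputable def Digraph.arcConn {V : Type*} (D : Digraph V) : ℕ :=
  sInf {k | ∃ F : Set (V × V), F ⊆ D.ArcSet ∧ F.ncard = k ∧ ¬ (D.DeleteArcs F).IsStrong}

noncomputable def Digraph.outDeg {V : Type*} (D : Digraph V) (v : V) : ℕ :=
  {w | D.Adj v w}.ncard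

noncomputable def Digraph.inDeg {V : Type*} (D : Digraph V) (v : V) : ℕ :=
  {w | D.Adj w v}.ncard

/-- Minimum out-degree. -/
noncomputable def Digraph.minOutDeg {V : Type*} (D : Digraph V) : ℕ := ⨅ v, D.outDeg v

/-- Minimum in-degree. -/
noncomputable def Digraph.minInDeg {V : Type*} (D : Digraph V) : ℕ := ⨅ v, D.inDeg v

/-- Cartesian product of digraphs. -/
def Digraph.cartProd {V W : Type*} (G : Digraph V) (H : Digraph W) : Digraph (V × W) :=
  ⟨fun a b => (G.Adj a.1 b.1 ∧ a.2 = b.2) ∨ (a.1 = b.1 ∧ H.Adj a.2 b.2)⟩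

/-- `B` is the arc set of an `S`-strong subgraph of `D`: the arcs of `B` are arcs of `D`,
and the subgraph with vertex set `S` together with all endpoints of `B`, and arc set `B`,
is strongly connected. -/
def Digraph.IsStrongSubgraphOn {V : Type*} (D : Digraph V) (S : Set V) (B : Set (V × V)) :
    Prop :=
  B ⊆ D.ArcSet ∧
  ∀ u ∈ S ∪ {v | ∃ e ∈ B, v = e.1 ∨ v = e.2},
    ∀ w ∈ S ∪ {v | ∃ e ∈ B, v = e.1 ∨ v = e.2},
      Relation.ReflTransGen (fun a b => (a, b) ∈ B) u w

/-- `λ_S(D)`: the maximum number of pairwise arc-disjoint `S`-strong subgraphs of `D`. -/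
noncomputable def Digraph.lambdaS {V : Type*} (D : Digraph V) (S : Set V) : ℕ :=
  sSup {k | ∃ f : Fin k → Set (V × V),
    (∀ i, D.IsStrongSubgraphOn S (f i)) ∧
    ∀ i j, i ≠ j → Disjoint (f i) (f j)}

/-- `λ_k(D)`: the strong subgraph `k`-arc-connectivity. -/
noncomputable def Digraph.lambdaK {V : Type*} (D : Digraph V) (k : ℕ) : ℕ :=
  sInf {m | ∃ S : Set V, S.ncard = k ∧ D.lambdaS S = m}

/-- The complete biorientation of an undirected graph. -/
def SimpleGraph.biorient {V : Type*} (G : SimpleGraph V) : Digraph V := ⟨G.Adj⟩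

/-- Edge-connectivity of an undirected graph: the minimum number of edges whose
removal disconnects the graph. -/
noncomputable def SimpleGraph.edgeConn {V : Type*} (G : SimpleGraph V) : ℕ :=
  sInf {k | ∃ F : Set (Sym2 V), F ⊆ G.edgeSet ∧ F.ncard = k ∧ ¬ (G.deleteEdges F).Connected}

/-- The directed cycle on `n` vertices. -/
def dirCycle (n : ℕ) : Digraph (Fin n) :=
  ⟨fun i j => (j : ℕ) = ((i : ℕ) + 1) % n⟩

/-- The complete biorientation of the cycle on `n` vertices. -/
def biCycle (n : ℕ) : Digraph (Fin n) :=
  ⟨fun i j => (j : ℕ) = ((i : ℕ) + 1) % n ∨ (i : ℕ) = ((j : ℕ) + 1) % n⟩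

/-- The complete digraph on `n` vertices. -/
def completeDigraph (n : ℕ) : Digraph (Fin n) := ⟨fun i j => i ≠ j⟩

/-!
Every `{u, v}`-strong subgraph contains an arc leaving `u`, since it must reach `v`; as `u` has
out-degree three in `→C_n □ ↔C_m`, at most three of them are pairwise arc-disjoint.

Conversely, write `u = (a, b)` and `v = (c, b + δ)`. Three arc-disjoint `{u, v}`-strong
subgraphs are unions of rows (the copies `→C_n × {r}`) and ladders (a segment of a column
traversed upwards and back down):
* if `a = c`: the ladder from `b` to `b + δ`, the complementary ladder from `b + δ` round to `b`,
  and the rows `b` and `b + δ` joined by the ladder between them in column `a + 1`;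
* if `δ = 0`: the row `b`, and each of the rows `b + 1` and `b - 1` joined to `u` and `v` by
  ladders of height one;
* otherwise, after possibly exchanging `u` and `v`, `1 ≤ δ ≤ m - 2`, and we take the row `b` with
  the ladder from `v` down to `(c, b)`, the row `b + δ` with the ladder from `u` up to
  `(a, b + δ)`, and the row `b + δ + 1` with the complementary ladder in column `a` and a ladder
  of height one in column `c`.
-/

open Relation Fin.NatCast Fin.CommRing

theorem Relation.reflTransGen_of_forall_lt_succ {α : Type*} {r : α → α → Prop} (f : ℕ → α)
    {k : ℕ} (h : ∀ t < k, r (f t) (f (t + 1))) : ReflTransGen r (f 0) (f k) := by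
  induction k with
  | zero => rfl
  | succ k ih => exact (ih fun t ht => h t (by omega)).tail (h k (by omega))

namespace Fin

variable {k : ℕ} [NeZero k]

theorem val_eq_val_add_one_mod_iff {i j : Fin k} :
    (j : ℕ) = ((i : ℕ) + 1) % k ↔ j = i + 1 := by
  rw [Fin.ext_iff, val_add, val_one', Nat.add_mod_mod]

theorem add_one_ne_self (hk : 2 ≤ k) (i : Fin k) : i + 1 ≠ i := by
  rw [Ne, add_eq_left, Fin.ext_iff, val_one', val_zero, Nat.mod_eq_of_lt hk]
  exact one_ne_zero

theorem add_one_ne_sub_one (hk : 3 ≤ k) (j : Fin k) : j + 1 ≠ j - 1 := by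
  rw [Ne, ← sub_eq_zero, add_sub_sub_cancel, one_add_one_eq_two, Fin.ext_iff, val_zero,
    coe_ofNat_eq_mod, Nat.mod_eq_of_lt (by omega)]
  exact two_ne_zero

theorem add_natCast_inj {j : Fin k} {t t' : ℕ} (ht : t < k) (ht' : t' < k) :
    j + (t : Fin k) = j + t' ↔ t = t' := by
  rw [add_right_inj, Fin.ext_iff, val_natCast, val_natCast, Nat.mod_eq_of_lt ht,
    Nat.mod_eq_of_lt ht']

theorem self_ne_add_natCast {j : Fin k} {t : ℕ} (ht : 0 < t) (htk : t < k) : j ≠ j + t := by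
  simpa using (add_natCast_inj (j := j) (NeZero.pos k) htk).not.2 ht.ne

end Fin

theorem dirCycle_adj_iff {n : ℕ} [NeZero n] {i j : Fin n} : (dirCycle n).Adj i j ↔ j = i + 1 :=
  Fin.val_eq_val_add_one_mod_iff

theorem biCycle_adj_iff {m : ℕ} [NeZero m] {i j : Fin m} :
    (biCycle m).Adj i j ↔ j = i + 1 ∨ j = i - 1 := by
  change _ ∨ _ ↔ _
  rw [Fin.val_eq_val_add_one_mod_iff, Fin.val_eq_val_add_one_mod_iff, eq_sub_iff_add_eq,
    eq_comm (a := j + 1)]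

namespace Digraph

variable {V : Type*} {D : Digraph V}

def StronglyConnects (D : Digraph V) (B : Set (V × V)) (W : Set V) : Prop :=
  B ⊆ D.ArcSet ∧ (∀ e ∈ B, e.1 ∈ W ∧ e.2 ∈ W) ∧
    ∀ x ∈ W, ∀ y ∈ W, ReflTransGen (fun a b => (a, b) ∈ B) x y

theorem StronglyConnects.union {B B' : Set (V × V)} {W W' : Set V}
    (h : D.StronglyConnects B W) (h' : D.StronglyConnects B' W') {z : V} (hz : z ∈ W)
    (hz' : z ∈ W') : D.StronglyConnects (B ∪ B') (W ∪ W') := by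
  have hhub : ∀ x ∈ W ∪ W', ReflTransGen (fun a b => (a, b) ∈ B ∪ B') x z ∧
      ReflTransGen (fun a b => (a, b) ∈ B ∪ B') z x := by
    rintro x (hx | hx)
    · exact ⟨.mono (fun _ _ => Or.inl) _ _ (h.2.2 x hx z hz),
        .mono (fun _ _ => Or.inl) _ _ (h.2.2 z hz x hx)⟩
    · exact ⟨.mono (fun _ _ => Or.inr) _ _ (h'.2.2 x hx z hz'),
        .mono (fun _ _ => Or.inr) _ _ (h'.2.2 z hz' x hx)⟩
  refine ⟨Set.union_subset h.1 h'.1, ?_, fun x hx y hy => (hhub x hx).1.trans (hhub y hy).2⟩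
  rintro e (he | he)
  exacts [(h.2.1 e he).imp Or.inl Or.inl, (h'.2.1 e he).imp Or.inr Or.inr]

theorem StronglyConnects.isStrongSubgraphOn {S W : Set V} {B : Set (V × V)}
    (h : D.StronglyConnects B W) (hS : S ⊆ W) : D.IsStrongSubgraphOn S B := by
  have hW : S ∪ {v | ∃ e ∈ B, v = e.1 ∨ v = e.2} ⊆ W := by
    refine Set.union_subset hS ?_
    rintro v ⟨e, he, rfl | rfl⟩
    exacts [(h.2.1 e he).1, (h.2.1 e he).2]
  exact ⟨h.1, fun x hx y hy => h.2.2 x (hW hx) y (hW hy)⟩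

def HasStrongSubgraphPacking (D : Digraph V) (S : Set V) (k : ℕ) : Prop :=
  ∃ f : Fin k → Set (V × V), (∀ i, D.IsStrongSubgraphOn S (f i)) ∧
    ∀ i j, i ≠ j → Disjoint (f i) (f j)

theorem HasStrongSubgraphPacking.three {S : Set V} {B₁ B₂ B₃ : Set (V × V)}
    (h₁ : D.IsStrongSubgraphOn S B₁) (h₂ : D.IsStrongSubgraphOn S B₂)
    (h₃ : D.IsStrongSubgraphOn S B₃) (h₁₂ : Disjoint B₁ B₂) (h₁₃ : Disjoint B₁ B₃)
    (h₂₃ : Disjoint B₂ B₃) : D.HasStrongSubgraphPacking S 3 := by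
  refine ⟨![B₁, B₂, B₃], fun i => by fin_cases i <;> assumption, fun i j hij => ?_⟩
  fin_cases i <;> fin_cases j <;> first
    | exact absurd rfl hij
    | assumption
    | exact Disjoint.symm ‹_›

theorem IsStrongSubgraphOn.exists_arc_from {u v : V} {B : Set (V × V)}
    (h : D.IsStrongSubgraphOn {u, v} B) (huv : u ≠ v) : ∃ w, (u, w) ∈ B := by
  obtain huv' | ⟨w, hw, -⟩ := (h.2 u (Or.inl (by simp)) v (Or.inl (by simp))).cases_head
  exacts [absurd huv' huv, ⟨w, hw⟩]

theorem HasStrongSubgraphPacking.le_outDeg [Finite V] {u v : V} {k : ℕ}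
    (h : D.HasStrongSubgraphPacking {u, v} k) (huv : u ≠ v) : k ≤ D.outDeg u := by
  obtain ⟨f, hf, hdisj⟩ := h
  choose g hg using fun i => (hf i).exists_arc_from huv
  have hinj : Function.Injective fun i => (⟨g i, (hf i).1 (hg i)⟩ : {w | D.Adj u w}) := by
    intro i j hij
    by_contra hne
    have hgij : g i = g j := congrArg Subtype.val hij
    exact Set.disjoint_left.1 (hdisj i j hne) (hg i) (hgij ▸ hg j)
  have hcard := Nat.card_le_card_of_injective _ hinj
  rwa [Nat.card_fin, Nat.card_coe_set_eq] at hcard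

theorem lambdaS_pair_eq [Finite V] {u v : V} {k : ℕ} (huv : u ≠ v) (hdeg : D.outDeg u ≤ k)
    (h : D.HasStrongSubgraphPacking {u, v} k) : D.lambdaS {u, v} = k := by
  have hbdd : ∀ j ∈ {j | D.HasStrongSubgraphPacking {u, v} j}, j ≤ k :=
    fun j hj => (HasStrongSubgraphPacking.le_outDeg hj huv).trans hdeg
  exact le_antisymm (csSup_le' hbdd) (le_csSup ⟨k, hbdd⟩ h)

theorem lambdaK_two_eq {k : ℕ} (hV : ∃ u v : V, u ≠ v)
    (h : ∀ u v : V, u ≠ v → D.lambdaS {u, v} = k) : D.lambdaK 2 = k := by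
  obtain ⟨u, v, huv⟩ := hV
  have hk : k ∈ {j | ∃ S : Set V, S.ncard = 2 ∧ D.lambdaS S = j} :=
    ⟨{u, v}, Set.ncard_pair huv, h u v huv⟩
  refine le_antisymm (Nat.sInf_le hk) (le_csInf ⟨k, hk⟩ ?_)
  rintro j ⟨S, hS, rfl⟩
  obtain ⟨x, y, hxy, rfl⟩ := Set.ncard_eq_two.1 hS
  exact (h x y hxy).ge

end Digraph

def dirTorus (n m : ℕ) : Digraph (Fin n × Fin m) := (dirCycle n).cartProd (biCycle m)

namespace dirTorus

variable {n m : ℕ}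

abbrev Arc (n m : ℕ) : Type := (Fin n × Fin m) × (Fin n × Fin m)

section Vertical

variable [NeZero m]

def upArc (p : Fin n × Fin m) : Arc n m := (p, (p.1, p.2 + 1))

def downArc (p : Fin n × Fin m) : Arc n m := (p, (p.1, p.2 - 1))

theorem upArc_ne_downArc (hm : 3 ≤ m) (p q : Fin n × Fin m) : upArc p ≠ downArc q := by
  intro h
  obtain ⟨rfl, h⟩ := Prod.mk.inj h
  exact Fin.add_one_ne_sub_one hm p.2 (congrArg Prod.snd h)

def ladder (x : Fin n) (j : Fin m) (k : ℕ) : Set (Arc n m) :=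
  {e | ∃ t < k, e = upArc (x, j + (t : Fin m)) ∨ e = downArc (x, j + (t : Fin m) + 1)}

theorem ladder_disjoint_ladder (hm : 3 ≤ m) {x : Fin n} {j j' : Fin m} {k s l : ℕ}
    (hks : k ≤ s) (hsl : s + l ≤ m) (hj : j' = j + s) :
    Disjoint (ladder x j k) (ladder x j' l) := by
  have hlevel : ∀ t < k, ∀ t' < l, j + (t : Fin m) ≠ j' + t' := by
    intro t ht t' ht' h
    rw [hj, add_assoc, ← Nat.cast_add, Fin.add_natCast_inj (by omega) (by omega)] at h
    omega
  rw [Set.disjoint_left]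
  rintro e ⟨t, ht, rfl | rfl⟩ ⟨t', ht', h | h⟩
  · exact hlevel t ht t' ht' (congrArg (·.1.2) h)
  · exact upArc_ne_downArc hm _ _ h
  · exact upArc_ne_downArc hm _ _ h.symm
  · exact hlevel t ht t' ht' (add_right_cancel (congrArg (·.1.2) h))

theorem ladder_disjoint_ladder_of_ne {x y : Fin n} (hxy : x ≠ y) (j j' : Fin m) (k l : ℕ) :
    Disjoint (ladder x j k) (ladder y j' l) := by
  rw [Set.disjoint_left]
  rintro e ⟨t, -, rfl | rfl⟩ ⟨t', -, h | h⟩ <;> exact hxy (congrArg (·.1.1) h)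

end Vertical

section Horizontal

variable [NeZero n]

def rightArc (p : Fin n × Fin m) : Arc n m := (p, (p.1 + 1, p.2))

def row (r : Fin m) : Set (Arc n m) := Set.range fun i : Fin n => rightArc (i, r)

theorem row_disjoint_row {r r' : Fin m} (h : r ≠ r') : Disjoint (row (n := n) r) (row r') := by
  rw [Set.disjoint_left]
  rintro _ ⟨i, rfl⟩ ⟨i', h'⟩
  exact h (congrArg (·.1.2) h').symm

end Horizontal

variable [NeZero n] [NeZero m]

theorem adj_iff {p q : Fin n × Fin m} :
    (dirTorus n m).Adj p q ↔
      q = (p.1 + 1, p.2) ∨ q = (p.1, p.2 + 1) ∨ q = (p.1, p.2 - 1) := by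
  obtain ⟨i, j⟩ := p
  obtain ⟨i', j'⟩ := q
  change (dirCycle n).Adj i i' ∧ j = j' ∨ i = i' ∧ (biCycle m).Adj j j' ↔ _
  simp only [dirCycle_adj_iff, biCycle_adj_iff, Prod.mk.injEq]
  constructor
  · rintro (⟨h, rfl⟩ | ⟨rfl, h | h⟩) <;> simp [h]
  · rintro (⟨h, rfl⟩ | ⟨rfl, h⟩ | ⟨rfl, h⟩) <;> simp [h]

theorem outDeg_le (p : Fin n × Fin m) : (dirTorus n m).outDeg p ≤ 3 := by
  classical
  let N : Finset (Fin n × Fin m) := {(p.1 + 1, p.2), (p.1, p.2 + 1), (p.1, p.2 - 1)}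
  calc (dirTorus n m).outDeg p ≤ (N : Set (Fin n × Fin m)).ncard :=
        Set.ncard_le_ncard (fun q hq => by simpa [N] using adj_iff.1 hq) N.finite_toSet
    _ ≤ 3 := by rw [Set.ncard_coe_finset]; exact Finset.card_le_three

theorem rightArc_ne_upArc (hn : 2 ≤ n) (p q : Fin n × Fin m) : rightArc p ≠ upArc q := by
  intro h
  obtain ⟨rfl, h⟩ := Prod.mk.inj h
  exact Fin.add_one_ne_self hn p.1 (congrArg Prod.fst h)

theorem rightArc_ne_downArc (hn : 2 ≤ n) (p q : Fin n × Fin m) : rightArc p ≠ downArc q := by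
  intro h
  obtain ⟨rfl, h⟩ := Prod.mk.inj h
  exact Fin.add_one_ne_self hn p.1 (congrArg Prod.fst h)

theorem row_disjoint_ladder (hn : 2 ≤ n) (r : Fin m) (x : Fin n) (j : Fin m) (k : ℕ) :
    Disjoint (row r) (ladder x j k) := by
  rw [Set.disjoint_left]
  rintro _ ⟨i, rfl⟩ ⟨t, -, h | h⟩
  exacts [rightArc_ne_upArc hn _ _ h, rightArc_ne_downArc hn _ _ h]

theorem stronglyConnects_row (r : Fin m) :
    (dirTorus n m).StronglyConnects (row r) {p | p.2 = r} := by
  have hwalk : ∀ (i : Fin n) (t : ℕ),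
      ReflTransGen (fun a b => (a, b) ∈ row r) (i, r) (i + (t : Fin n), r) := fun i t => by
    simpa using reflTransGen_of_forall_lt_succ (fun s : ℕ => (i + (s : Fin n), r)) (k := t)
      fun s _ => ⟨i + s, by simp [rightArc, add_assoc]⟩
  refine ⟨?_, ?_, ?_⟩
  · rintro _ ⟨i, rfl⟩
    exact adj_iff.2 (Or.inl rfl)
  · rintro _ ⟨i, rfl⟩
    exact ⟨rfl, rfl⟩
  · rintro ⟨i, _⟩ rfl ⟨i', _⟩ rfl
    simpa using hwalk i (i' - i).val

theorem stronglyConnects_ladder (x : Fin n) (j : Fin m) (k : ℕ) :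
    (dirTorus n m).StronglyConnects (ladder x j k) {p | ∃ t ≤ k, p = (x, j + (t : Fin m))} := by
  let g : ℕ → Fin n × Fin m := fun t => (x, j + (t : Fin m))
  have hup : ∀ t < k, (g t, g (t + 1)) ∈ ladder x j k :=
    fun t ht => ⟨t, ht, Or.inl (by simp [g, upArc, add_assoc])⟩
  have hdown : ∀ t < k, (g (t + 1), g t) ∈ ladder x j k :=
    fun t ht => ⟨t, ht, Or.inr (by simp [g, downArc, ← add_assoc])⟩
  have hbase : ∀ s ≤ k, ReflTransGen (fun a b => (a, b) ∈ ladder x j k) (g 0) (g s) ∧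
      ReflTransGen (fun a b => (a, b) ∈ ladder x j k) (g s) (g 0) := fun s hs =>
    ⟨reflTransGen_of_forall_lt_succ g fun t ht => hup t (by omega),
      reflTransGen_swap.1 (reflTransGen_of_forall_lt_succ g fun t ht => hdown t (by omega))⟩
  refine ⟨?_, ?_, ?_⟩
  · rintro _ ⟨t, -, rfl | rfl⟩
    · exact adj_iff.2 (Or.inr (Or.inl rfl))
    · exact adj_iff.2 (Or.inr (Or.inr rfl))
  · rintro e ⟨t, ht, rfl | rfl⟩
    · exact ⟨⟨t, ht.le, rfl⟩, ⟨t + 1, ht, by simp [upArc, add_assoc]⟩⟩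
    · exact ⟨⟨t + 1, ht, by simp [downArc, add_assoc]⟩, ⟨t, ht.le, by simp [downArc]⟩⟩
  · rintro _ ⟨s, hs, rfl⟩ _ ⟨s', hs', rfl⟩
    exact (hbase s hs).2.trans (hbase s' hs').1

theorem hasStrongSubgraphPacking_pair_of_fst_eq (hn : 2 ≤ n) (hm : 3 ≤ m) (a : Fin n)
    (b : Fin m) {δ : ℕ} (hδ : 0 < δ) (hδm : δ < m) :
    (dirTorus n m).HasStrongSubgraphPacking {(a, b), (a, b + δ)} 3 := by
  set d : Fin m := b + δ with hd
  have hwrap : d + ((m - δ : ℕ) : Fin m) = b := by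
    rw [hd, add_assoc, ← Nat.cast_add, Nat.add_sub_cancel' hδm.le, Fin.natCast_self, add_zero]
  have hne : a ≠ a + 1 := (Fin.add_one_ne_self hn a).symm
  have hB₃ := ((stronglyConnects_row b).union (stronglyConnects_ladder (a + 1) b δ)
    (z := (a + 1, b)) rfl ⟨0, hδ.le, by simp⟩).union (stronglyConnects_row d)
    (z := (a + 1, d)) (Or.inr ⟨δ, le_rfl, rfl⟩) rfl
  refine .three (B₁ := ladder a b δ) (B₂ := ladder a d (m - δ))
    (B₃ := row b ∪ ladder (a + 1) b δ ∪ row d) ?_ ?_ ?_ ?_ ?_ ?_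
  · exact (stronglyConnects_ladder a b δ).isStrongSubgraphOn
      (Set.pair_subset ⟨0, hδ.le, by simp⟩ ⟨δ, le_rfl, rfl⟩)
  · exact (stronglyConnects_ladder a d (m - δ)).isStrongSubgraphOn
      (Set.pair_subset ⟨m - δ, le_rfl, by rw [hwrap]⟩ ⟨0, Nat.zero_le _, by simp⟩)
  · exact hB₃.isStrongSubgraphOn (Set.pair_subset (Or.inl (Or.inl rfl)) (Or.inr rfl))
  · exact ladder_disjoint_ladder hm le_rfl (by omega) hd
  · exact .union_right (.union_right (row_disjoint_ladder hn ..).symm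
      (ladder_disjoint_ladder_of_ne hne ..)) (row_disjoint_ladder hn ..).symm
  · exact .union_right (.union_right (row_disjoint_ladder hn ..).symm
      (ladder_disjoint_ladder_of_ne hne ..)) (row_disjoint_ladder hn ..).symm

theorem hasStrongSubgraphPacking_pair_of_snd_eq (hn : 2 ≤ n) (hm : 3 ≤ m) {a c : Fin n}
    (hac : a ≠ c) (b : Fin m) : (dirTorus n m).HasStrongSubgraphPacking {(a, b), (c, b)} 3 := by
  have hb : b - 1 = b + ((m - 1 : ℕ) : Fin m) := by
    rw [Nat.cast_sub NeZero.one_le, Fin.natCast_self, Nat.cast_one, zero_sub, sub_eq_add_neg]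
  have hb₁ : b ≠ b + 1 := (Fin.add_one_ne_self (by omega) b).symm
  have hb₂ : b ≠ b - 1 := fun h =>
    Fin.add_one_ne_self (by omega) (b - 1) (by rw [sub_add_cancel]; exact h)
  have hB₂ := ((stronglyConnects_row (b + 1)).union (stronglyConnects_ladder a b 1)
    (z := (a, b + 1)) rfl ⟨1, le_rfl, by simp⟩).union (stronglyConnects_ladder c b 1)
    (z := (c, b + 1)) (Or.inl rfl) ⟨1, le_rfl, by simp⟩
  have hB₃ := ((stronglyConnects_row (b - 1)).union (stronglyConnects_ladder a (b - 1) 1)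
    (z := (a, b - 1)) rfl ⟨0, zero_le_one, by simp⟩).union
    (stronglyConnects_ladder c (b - 1) 1) (z := (c, b - 1)) (Or.inl rfl)
    ⟨0, zero_le_one, by simp⟩
  refine .three (B₁ := row b) (B₂ := row (b + 1) ∪ ladder a b 1 ∪ ladder c b 1)
    (B₃ := row (b - 1) ∪ ladder a (b - 1) 1 ∪ ladder c (b - 1) 1) ?_ ?_ ?_ ?_ ?_ ?_
  · exact (stronglyConnects_row b).isStrongSubgraphOn (Set.pair_subset rfl rfl)
  · exact hB₂.isStrongSubgraphOn (Set.pair_subset (Or.inl (Or.inr ⟨0, zero_le_one, by simp⟩))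
      (Or.inr ⟨0, zero_le_one, by simp⟩))
  · exact hB₃.isStrongSubgraphOn (Set.pair_subset (Or.inl (Or.inr ⟨1, le_rfl, by simp⟩))
      (Or.inr ⟨1, le_rfl, by simp⟩))
  · exact .union_right (.union_right (row_disjoint_row hb₁) (row_disjoint_ladder hn ..))
      (row_disjoint_ladder hn ..)
  · exact .union_right (.union_right (row_disjoint_row hb₂) (row_disjoint_ladder hn ..))
      (row_disjoint_ladder hn ..)
  · have hshift : ∀ x : Fin n, Disjoint (ladder x b 1) (ladder x (b - 1) 1) :=
      fun x => ladder_disjoint_ladder hm (by omega) (by omega) hb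
    refine .union_left (.union_left ?_ ?_) ?_
    · exact .union_right (.union_right (row_disjoint_row (Fin.add_one_ne_sub_one hm b))
        (row_disjoint_ladder hn ..)) (row_disjoint_ladder hn ..)
    · exact .union_right (.union_right (row_disjoint_ladder hn ..).symm (hshift a))
        (ladder_disjoint_ladder_of_ne hac ..)
    · exact .union_right (.union_right (row_disjoint_ladder hn ..).symm
        (ladder_disjoint_ladder_of_ne hac.symm ..)) (hshift c)

theorem hasStrongSubgraphPacking_pair_of_fst_ne (hn : 2 ≤ n) (hm : 3 ≤ m) {a c : Fin n}
    (hac : a ≠ c) (b : Fin m) {δ : ℕ} (hδ : 0 < δ) (hδm : δ + 2 ≤ m) :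
    (dirTorus n m).HasStrongSubgraphPacking {(a, b), (c, b + δ)} 3 := by
  set d : Fin m := b + δ with hd
  have hwrap : d + 1 + ((m - δ - 1 : ℕ) : Fin m) = b := by
    rw [hd, add_assoc, add_assoc, ← Nat.cast_one, ← Nat.cast_add, ← Nat.cast_add,
      show δ + (1 + (m - δ - 1)) = m by omega, Fin.natCast_self, add_zero]
  have hd₁ : d + 1 = b + ((δ + 1 : ℕ) : Fin m) := by rw [hd, Nat.cast_succ, add_assoc]
  have hr₁ : b ≠ d := Fin.self_ne_add_natCast hδ (by omega)
  have hr₂ : b ≠ d + 1 := hd₁ ▸ Fin.self_ne_add_natCast (by omega) (by omega)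
  have hr₃ : d ≠ d + 1 := (Fin.add_one_ne_self (by omega) d).symm
  have hB₁ := (stronglyConnects_row b).union (stronglyConnects_ladder c b δ)
    (z := (c, b)) rfl ⟨0, hδ.le, by simp⟩
  have hB₂ := (stronglyConnects_row d).union (stronglyConnects_ladder a b δ)
    (z := (a, d)) rfl ⟨δ, le_rfl, rfl⟩
  have hB₃ := ((stronglyConnects_row (d + 1)).union (stronglyConnects_ladder a (d + 1) (m - δ - 1))
    (z := (a, d + 1)) rfl ⟨0, Nat.zero_le _, by simp⟩).union (stronglyConnects_ladder c d 1)
    (z := (c, d + 1)) (Or.inl rfl) ⟨1, le_rfl, by simp⟩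
  refine .three (B₁ := row b ∪ ladder c b δ) (B₂ := row d ∪ ladder a b δ)
    (B₃ := row (d + 1) ∪ ladder a (d + 1) (m - δ - 1) ∪ ladder c d 1) ?_ ?_ ?_ ?_ ?_ ?_
  · exact hB₁.isStrongSubgraphOn (Set.pair_subset (Or.inl rfl) (Or.inr ⟨δ, le_rfl, rfl⟩))
  · exact hB₂.isStrongSubgraphOn (Set.pair_subset (Or.inr ⟨0, hδ.le, by simp⟩) (Or.inl rfl))
  · exact hB₃.isStrongSubgraphOn
      (Set.pair_subset (Or.inl (Or.inr ⟨m - δ - 1, le_rfl, hwrap.symm ▸ rfl⟩))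
        (Or.inr ⟨0, zero_le_one, by simp⟩))
  · exact .union_left (.union_right (row_disjoint_row hr₁) (row_disjoint_ladder hn ..))
      (.union_right (row_disjoint_ladder hn ..).symm (ladder_disjoint_ladder_of_ne hac.symm ..))
  · refine .union_left ?_ ?_
    · exact .union_right (.union_right (row_disjoint_row hr₂) (row_disjoint_ladder hn ..))
        (row_disjoint_ladder hn ..)
    · exact .union_right (.union_right (row_disjoint_ladder hn ..).symm
        (ladder_disjoint_ladder_of_ne hac.symm ..)) (ladder_disjoint_ladder hm le_rfl (by omega) hd)
  · refine .union_left ?_ ?_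
    · exact .union_right (.union_right (row_disjoint_row hr₃) (row_disjoint_ladder hn ..))
        (row_disjoint_ladder hn ..)
    · exact .union_right (.union_right (row_disjoint_ladder hn ..).symm
        (ladder_disjoint_ladder hm (by omega) (by omega) hd₁)) (ladder_disjoint_ladder_of_ne hac ..)

theorem hasStrongSubgraphPacking_pair (hn : 2 ≤ n) (hm : 3 ≤ m) {u v : Fin n × Fin m}
    (huv : u ≠ v) : (dirTorus n m).HasStrongSubgraphPacking {u, v} 3 := by
  obtain ⟨a, b⟩ := u
  obtain ⟨c, d⟩ := v
  obtain ⟨δ, hδm, rfl⟩ : ∃ δ < m, d = b + (δ : Fin m) := ⟨(d - b).val, (d - b).isLt, by simp⟩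
  rcases eq_or_ne a c with rfl | hac
  · refine hasStrongSubgraphPacking_pair_of_fst_eq hn hm a b (Nat.pos_of_ne_zero ?_) hδm
    rintro rfl
    simp at huv
  rcases Nat.eq_zero_or_pos δ with rfl | hδ
  · rw [Nat.cast_zero, add_zero]
    exact hasStrongSubgraphPacking_pair_of_snd_eq hn hm hac b
  rcases Nat.lt_or_ge δ (m - 1) with hδ' | hδ'
  · exact hasStrongSubgraphPacking_pair_of_fst_ne hn hm hac b hδ (by omega)
  -- `δ = m - 1`: `u` lies one level above `v`, so swap the roles of `u` and `v`
  have hb : b + (δ : Fin m) + ((1 : ℕ) : Fin m) = b := by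
    rw [add_assoc, ← Nat.cast_add, show δ + 1 = m by omega, Fin.natCast_self, add_zero]
  rw [Set.pair_comm]
  simpa only [hb] using hasStrongSubgraphPacking_pair_of_fst_ne hn hm hac.symm (b + δ) one_pos hm

end dirTorus

theorem stmt13 (n m : ℕ) (hn : 3 ≤ n) (hm : 3 ≤ m) :
    ((dirCycle n).cartProd (biCycle m)).lambdaK 2 = 3 := by
  have : NeZero n := ⟨by omega⟩
  have : NeZero m := ⟨by omega⟩
  have hV : ∃ u v : Fin n × Fin m, u ≠ v :=
    ⟨(0, 0), (0, 1), fun h => Fin.add_one_ne_self (by omega) (0 : Fin m) (by simpa using h.symm)⟩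
  exact Digraph.lambdaK_two_eq hV fun u v huv => Digraph.lambdaS_pair_eq huv
    (dirTorus.outDeg_le u) (dirTorus.hasStrongSubgraphPacking_pair (by omega) hm huv)
end

section
/- For integers n ≥ 3 and m ≥ 2, λ_2(→C_n □ ↔K_m) = m, where →C_n is the directed cycle on n vertices and ↔K_m is the complete digraph on m vertices. -/
/-!
Every `{u, v}`-strong subgraph leaves `u` through one of its arcs, and `u` has out-degree `m`
in `C_n □ K_m` (one cycle arc and `m - 1` arcs inside its fibre), so at most `m` of them are
arc-disjoint. Conversely, for each colour `c` the `c`-th copy of `C_n`, joined to `u` and `v`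
by 2-cycles inside their fibres, is `{u, v}`-strong; these `m` subgraphs are arc-disjoint
unless `u = (i, a)` and `v = (i, b)` lie in one fibre, where the members for `a` and `b` are
replaced by the 2-cycle on `u, v` and by a detour through the copies `a` and `b`.
-/

namespace Digraph

variable {V W : Type*}

section StrongSubgraph

variable {D : Digraph V} {S T S₁ S₂ : Set V} {B B₁ B₂ : Set (V × V)}

lemma IsStrongSubgraphOn.anti (h : D.IsStrongSubgraphOn S B) (hTS : T ⊆ S) :
    D.IsStrongSubgraphOn T B :=
  ⟨h.1, fun u hu w hw =>
    h.2 u (Set.union_subset_union_left _ hTS hu) w (Set.union_subset_union_left _ hTS hw)⟩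

lemma IsStrongSubgraphOn.union (h₁ : D.IsStrongSubgraphOn S₁ B₁)
    (h₂ : D.IsStrongSubgraphOn S₂ B₂) {x : V} (hx₁ : x ∈ S₁) (hx₂ : x ∈ S₂) :
    D.IsStrongSubgraphOn (S₁ ∪ S₂) (B₁ ∪ B₂) := by
  have mono₁ := Relation.ReflTransGen.mono (r := fun a b => (a, b) ∈ B₁)
    (p := fun a b => (a, b) ∈ B₁ ∪ B₂) fun _ _ h => Or.inl h
  have mono₂ := Relation.ReflTransGen.mono (r := fun a b => (a, b) ∈ B₂)
    (p := fun a b => (a, b) ∈ B₁ ∪ B₂) fun _ _ h => Or.inr h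
  have hub : ∀ u ∈ S₁ ∪ S₂ ∪ {v | ∃ e ∈ B₁ ∪ B₂, v = e.1 ∨ v = e.2},
      Relation.ReflTransGen (fun a b => (a, b) ∈ B₁ ∪ B₂) u x ∧
      Relation.ReflTransGen (fun a b => (a, b) ∈ B₁ ∪ B₂) x u := by
    intro u hu
    obtain hu | hu : u ∈ S₁ ∪ {v | ∃ e ∈ B₁, v = e.1 ∨ v = e.2} ∨
        u ∈ S₂ ∪ {v | ∃ e ∈ B₂, v = e.1 ∨ v = e.2} := by
      simp only [Set.mem_union, Set.mem_ofPred_eq] at hu ⊢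
      aesop
    · exact ⟨mono₁ _ _ (h₁.2 u hu x (.inl hx₁)), mono₁ _ _ (h₁.2 x (.inl hx₁) u hu)⟩
    · exact ⟨mono₂ _ _ (h₂.2 u hu x (.inl hx₂)), mono₂ _ _ (h₂.2 x (.inl hx₂) u hu)⟩
  exact ⟨Set.union_subset h₁.1 h₂.1, fun u hu w hw => (hub u hu).1.trans (hub w hw).2⟩

lemma IsStrongSubgraphOn.exists_arc_of_ne (h : D.IsStrongSubgraphOn S B) {u v : V}
    (hu : u ∈ S) (hv : v ∈ S) (huv : u ≠ v) : ∃ w, (u, w) ∈ B := by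
  rcases (h.2 u (.inl hu) v (.inl hv)).cases_head with rfl | ⟨w, hw, -⟩
  · exact absurd rfl huv
  · exact ⟨w, hw⟩

/-- Each member of the family must leave `u` through its own arc. -/
lemma card_le_outDeg {k : ℕ} {f : Fin k → Set (V × V)} (hf : ∀ i, D.IsStrongSubgraphOn S (f i))
    (hdisj : ∀ i j, i ≠ j → Disjoint (f i) (f j)) {u v : V} (hu : u ∈ S) (hv : v ∈ S)
    (huv : u ≠ v) (hfin : {w | D.Adj u w}.Finite) : k ≤ D.outDeg u := by
  choose w hw using fun i => (hf i).exists_arc_of_ne hu hv huv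
  have hinj : Function.Injective w := fun i j hij => by
    by_contra hne
    exact Set.disjoint_left.mp (hdisj i j hne) (hw i) (hij ▸ hw j)
  calc k = (Set.univ : Set (Fin k)).ncard := by simp
    _ ≤ D.outDeg u :=
      Set.ncard_le_ncard_of_injOn w (fun i _ => (hf i).1 (hw i)) hinj.injOn hfin

end StrongSubgraph

lemma lambdaK_eq_of_forall {D : Digraph V} {k t : ℕ} (hk : ∃ S : Set V, S.ncard = k)
    (h : ∀ S : Set V, S.ncard = k → D.lambdaS S = t) : D.lambdaK k = t := by
  obtain ⟨S, hS⟩ := hk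
  refine le_antisymm (Nat.sInf_le ⟨S, hS, h S hS⟩) (le_csInf ⟨t, S, hS, h S hS⟩ ?_)
  rintro _ ⟨S', hS', rfl⟩
  exact (h S' hS').ge

section TwoCycle

variable {D : Digraph V}

/-- Empty when `x = y`, so that no loop arc arises. -/
def twoCycle (x y : V) : Set (V × V) := {e | s(e.1, e.2) = s(x, y) ∧ e.1 ≠ e.2}

lemma mem_twoCycle {x y : V} {e : V × V} :
    e ∈ twoCycle x y ↔ x ≠ y ∧ (e = (x, y) ∨ e = (y, x)) := by
  obtain ⟨e₁, e₂⟩ := e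
  simp only [twoCycle, Set.mem_ofPred_eq, Sym2.eq_iff, Prod.mk.injEq]
  aesop

lemma isStrongSubgraphOn_twoCycle {x y : V} (h : x ≠ y → D.Adj x y ∧ D.Adj y x) :
    D.IsStrongSubgraphOn {x, y} (twoCycle x y) := by
  have hxy : Relation.ReflTransGen (fun a b => (a, b) ∈ twoCycle x y) x y ∧
      Relation.ReflTransGen (fun a b => (a, b) ∈ twoCycle x y) y x := by
    by_cases hxy : x = y
    · subst hxy; exact ⟨.refl, .refl⟩
    · exact ⟨.single (mem_twoCycle.2 ⟨hxy, .inl rfl⟩), .single (mem_twoCycle.2 ⟨hxy, .inr rfl⟩)⟩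
  have hV : ∀ u ∈ {x, y} ∪ {v | ∃ e ∈ twoCycle x y, v = e.1 ∨ v = e.2}, u = x ∨ u = y := by
    rintro u (hu | ⟨e, he, hue⟩)
    · simpa using hu
    · obtain ⟨-, rfl | rfl⟩ := mem_twoCycle.1 he <;> simpa [or_comm] using hue
  refine ⟨fun e he => ?_, fun u hu w hw => ?_⟩
  · obtain ⟨hne, rfl | rfl⟩ := mem_twoCycle.1 he
    exacts [(h hne).1, (h hne).2]
  · rcases hV u hu with rfl | rfl <;> rcases hV w hw with rfl | rfl
    exacts [.refl, hxy.1, hxy.2, .refl]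

lemma twoCycle_disjoint {x y x' y' : V} (h : s(x, y) ≠ s(x', y')) :
    Disjoint (twoCycle x y) (twoCycle x' y') :=
  Set.disjoint_left.2 fun _ he he' => h (he.1.symm.trans he'.1)

end TwoCycle

section CartProd

variable {G : Digraph V} {H : Digraph W}

lemma outDeg_cartProd_le [Finite W] (hG : ∀ x y y', G.Adj x y → G.Adj x y' → y = y')
    (hH : ∀ y, ¬ H.Adj y y) (u : V × W) : (G.cartProd H).outDeg u ≤ Nat.card W := by
  rw [← Set.ncard_univ]
  refine Set.ncard_le_ncard_of_injOn Prod.snd (fun _ _ => Set.mem_univ _) ?_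
  rintro w (⟨hw, hw₂⟩ | ⟨hw₁, hw₂⟩) w' (⟨hw', hw₂'⟩ | ⟨hw₁', hw₂'⟩) h
  · exact Prod.ext (hG _ _ _ hw hw') h
  · exact absurd (by rwa [← h, ← hw₂] at hw₂') (hH u.2)
  · exact absurd (by rwa [h, ← hw₂'] at hw₂) (hH u.2)
  · exact Prod.ext (hw₁.symm.trans hw₁') h

variable (G) in
def layer (c : W) : Set ((V × W) × (V × W)) := {e | G.Adj e.1.1 e.2.1 ∧ e.1.2 = c ∧ e.2.2 = c}

lemma layer_subset_arcSet (c : W) : G.layer c ⊆ (G.cartProd H).ArcSet :=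
  fun _ ⟨hG, h₁, h₂⟩ => .inl ⟨hG, h₁.trans h₂.symm⟩

lemma isStrongSubgraphOn_layer (hG : G.IsStrong) {S : Set (V × W)} {c : W}
    (hS : ∀ x ∈ S, x.2 = c) : (G.cartProd H).IsStrongSubgraphOn S (G.layer c) := by
  have hV : ∀ x ∈ S ∪ {v | ∃ e ∈ G.layer c, v = e.1 ∨ v = e.2}, x = (x.1, c) := by
    rintro x (hx | ⟨e, ⟨-, he₁, he₂⟩, rfl | rfl⟩)
    exacts [Prod.ext rfl (hS x hx), Prod.ext rfl he₁, Prod.ext rfl he₂]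
  refine ⟨layer_subset_arcSet c, fun u hu w hw => ?_⟩
  rw [hV u hu, hV w hw]
  exact Relation.ReflTransGen.lift (fun p => (p, c)) (fun _ _ hab => ⟨hab, rfl, rfl⟩) _ _
    (hG u.1 w.1)

lemma layer_disjoint {c c' : W} (h : c ≠ c') : Disjoint (G.layer c) (G.layer c') :=
  Set.disjoint_left.2 fun _ he he' => h (he.2.1.symm.trans he'.2.1)

lemma layer_disjoint_twoCycle (hG : ∀ x, ¬ G.Adj x x) (c : W) (i : V) (a b : W) :
    Disjoint (G.layer c) (twoCycle (i, a) (i, b)) := by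
  refine Set.disjoint_left.2 fun e he he' => ?_
  obtain ⟨-, rfl | rfl⟩ := mem_twoCycle.1 he'
  exacts [hG i he.1, hG i he.1]

end CartProd

section CompleteFibres

variable {m : ℕ} {G : Digraph V}

lemma isStrongSubgraphOn_twoCycle_fibre (i : V) (a b : Fin m) :
    (G.cartProd (completeDigraph m)).IsStrongSubgraphOn {(i, a), (i, b)}
      (twoCycle (i, a) (i, b)) :=
  isStrongSubgraphOn_twoCycle fun h =>
    have hab : a ≠ b := fun hab => h (hab ▸ rfl)
    ⟨.inr ⟨rfl, hab⟩, .inr ⟨rfl, hab.symm⟩⟩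

variable (G) in
def spokedLayer (u v : V × Fin m) (c : Fin m) : Set ((V × Fin m) × (V × Fin m)) :=
  G.layer c ∪ twoCycle u (u.1, c) ∪ twoCycle v (v.1, c)

lemma isStrongSubgraphOn_spokedLayer (hG : G.IsStrong) (u v : V × Fin m) (c : Fin m) :
    (G.cartProd (completeDigraph m)).IsStrongSubgraphOn {u, v} (G.spokedLayer u v c) := by
  have hL := isStrongSubgraphOn_layer (H := completeDigraph m) hG
    (S := {(u.1, c), (v.1, c)}) (c := c) (by simp)
  have hu := isStrongSubgraphOn_twoCycle_fibre (G := G) u.1 u.2 c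
  have hv := isStrongSubgraphOn_twoCycle_fibre (G := G) v.1 v.2 c
  refine (((hL.union hu (x := (u.1, c)) (by simp) (by simp)).union hv (x := (v.1, c))
    (by simp) (by simp)).anti ?_)
  intro x hx
  rcases hx with rfl | rfl <;> simp

lemma spokedLayer_disjoint (hG : ∀ x, ¬ G.Adj x x) {u v : V × Fin m} {c c' : Fin m}
    (hcc : c ≠ c') (huv : u.1 ≠ v.1 ∨ c ≠ u.2 ∧ c ≠ v.2) :
    Disjoint (G.spokedLayer u v c) (G.spokedLayer u v c') := by
  simp only [spokedLayer, Set.disjoint_union_left, Set.disjoint_union_right]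
  refine ⟨⟨⟨⟨?_, ?_⟩, ?_⟩, ⟨?_, ?_⟩, ?_⟩, ⟨?_, ?_⟩, ?_⟩
  all_goals first
    | exact layer_disjoint hcc
    | exact layer_disjoint_twoCycle hG _ _ _ _
    | exact (layer_disjoint_twoCycle hG _ _ _ _).symm
    | exact twoCycle_disjoint (by simp; grind)

variable (G) in
def detour (i' : V) (a b : Fin m) : Set ((V × Fin m) × (V × Fin m)) :=
  G.layer a ∪ twoCycle (i', a) (i', b) ∪ G.layer b

lemma isStrongSubgraphOn_detour (hG : G.IsStrong) (i i' : V) (a b : Fin m) :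
    (G.cartProd (completeDigraph m)).IsStrongSubgraphOn {(i, a), (i, b)} (G.detour i' a b) := by
  have ha := isStrongSubgraphOn_layer (H := completeDigraph m) hG
    (S := {(i, a), (i', a)}) (c := a) (by simp)
  have hb := isStrongSubgraphOn_layer (H := completeDigraph m) hG
    (S := {(i, b), (i', b)}) (c := b) (by simp)
  have hab := isStrongSubgraphOn_twoCycle_fibre (G := G) i' a b
  refine (((ha.union hab (x := (i', a)) (by simp) (by simp)).union hb (x := (i', b))
    (by simp) (by simp)).anti ?_)
  intro x hx
  rcases hx with rfl | rfl <;> simp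

variable (G) in
/-- For `u = (i, a)` and `v = (i, b)`, `spokedLayer G u v a` and `spokedLayer G u v b` would
share the 2-cycle on `u, v`. -/
def sameFibreFamily (i i' : V) (a b c : Fin m) : Set ((V × Fin m) × (V × Fin m)) :=
  if c = a then twoCycle (i, a) (i, b)
  else if c = b then G.detour i' a b
  else G.spokedLayer (i, a) (i, b) c

lemma isStrongSubgraphOn_sameFibreFamily (hG : G.IsStrong) (i i' : V) (a b c : Fin m) :
    (G.cartProd (completeDigraph m)).IsStrongSubgraphOn {(i, a), (i, b)}
      (G.sameFibreFamily i i' a b c) := by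
  unfold sameFibreFamily
  split_ifs
  exacts [isStrongSubgraphOn_twoCycle_fibre i a b, isStrongSubgraphOn_detour hG i i' a b,
    isStrongSubgraphOn_spokedLayer hG _ _ c]

lemma sameFibreFamily_disjoint (hG : ∀ x, ¬ G.Adj x x) {i i' : V} (hi : i ≠ i') {a b : Fin m}
    (hab : a ≠ b) {c c' : Fin m} (hcc : c ≠ c') :
    Disjoint (G.sameFibreFamily i i' a b c) (G.sameFibreFamily i i' a b c') := by
  unfold sameFibreFamily
  split_ifs
  any_goals exact spokedLayer_disjoint hG hcc (.inr ⟨‹_›, ‹_›⟩)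
  all_goals
    try simp only [detour, spokedLayer, Set.disjoint_union_left, Set.disjoint_union_right]
    repeat' constructor
  all_goals first
    | exact layer_disjoint (by grind)
    | exact layer_disjoint_twoCycle hG _ _ _ _
    | exact (layer_disjoint_twoCycle hG _ _ _ _).symm
    | exact twoCycle_disjoint (by simp; grind)

lemma exists_disjoint_strongSubgraphs [Nontrivial V] (hG : G.IsStrong)
    (hG' : ∀ x, ¬ G.Adj x x) {u v : V × Fin m} (huv : u ≠ v) :
    ∃ f : Fin m → Set ((V × Fin m) × (V × Fin m)),
      (∀ c, (G.cartProd (completeDigraph m)).IsStrongSubgraphOn {u, v} (f c)) ∧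
      ∀ c c', c ≠ c' → Disjoint (f c) (f c') := by
  by_cases h : u.1 = v.1
  · obtain ⟨i, a⟩ := u
    obtain ⟨j, b⟩ := v
    obtain rfl : i = j := h
    have hab : a ≠ b := fun hab => huv (hab ▸ rfl)
    obtain ⟨i', hi⟩ := exists_ne i
    exact ⟨G.sameFibreFamily i i' a b, isStrongSubgraphOn_sameFibreFamily hG i i' a b,
      fun _ _ => sameFibreFamily_disjoint hG' hi.symm hab⟩
  · exact ⟨G.spokedLayer u v, isStrongSubgraphOn_spokedLayer hG u v,
      fun _ _ hcc => spokedLayer_disjoint hG' hcc (.inl h)⟩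

end CompleteFibres

end Digraph

section DirCycle

variable {n : ℕ}

lemma dirCycle_adj_add_one [NeZero n] (i : Fin n) : (dirCycle n).Adj i (i + 1) := by
  show ((i + 1 : Fin n) : ℕ) = _
  simp [Fin.val_add]

lemma dirCycle_adj_unique {i j j' : Fin n} (h : (dirCycle n).Adj i j)
    (h' : (dirCycle n).Adj i j') : j = j' :=
  Fin.ext (h.trans h'.symm)

lemma dirCycle_not_adj_self (hn : 2 ≤ n) (i : Fin n) : ¬ (dirCycle n).Adj i i := by
  intro h
  change (i : ℕ) = (i + 1) % n at h
  rcases Nat.lt_or_ge (i + 1) n with hlt | hge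
  · rw [Nat.mod_eq_of_lt hlt] at h
    omega
  · rw [show (i : ℕ) + 1 = n by omega, Nat.mod_self] at h
    omega

open Fin.CommRing in
lemma dirCycle_isStrong (n : ℕ) : (dirCycle n).IsStrong := by
  intro u v
  have : NeZero n := ⟨by rintro rfl; exact u.elim0⟩
  have walk : ∀ k : ℕ, Relation.ReflTransGen (dirCycle n).Adj u (u + k) := by
    intro k
    induction k with
    | zero => simpa using .refl
    | succ k ih => simpa [add_assoc] using ih.tail (dirCycle_adj_add_one (u + (k : Fin n)))
  simpa using walk (v - u).val

end DirCycle

theorem lambdaS_dirCycle_cartProd_completeDigraph {n m : ℕ} (hn : 2 ≤ n) {u v : Fin n × Fin m}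
    (huv : u ≠ v) : ((dirCycle n).cartProd (completeDigraph m)).lambdaS {u, v} = m := by
  have : Nontrivial (Fin n) := Fin.nontrivial_iff_two_le.2 hn
  refine IsGreatest.csSup_eq ⟨Digraph.exists_disjoint_strongSubgraphs (dirCycle_isStrong n)
    (dirCycle_not_adj_self hn) huv, ?_⟩
  rintro k ⟨f, hf, hdisj⟩
  calc k ≤ _ := Digraph.card_le_outDeg hf hdisj (Set.mem_insert u {v})
        (Set.mem_insert_of_mem u rfl) huv (Set.toFinite _)
    _ ≤ Nat.card (Fin m) := Digraph.outDeg_cartProd_le (H := completeDigraph m)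
        (fun _ _ _ => dirCycle_adj_unique) (fun _ h => h rfl) u
    _ = m := Nat.card_fin m

theorem stmt15 (n m : ℕ) (hn : 3 ≤ n) (hm : 2 ≤ m) :
    ((dirCycle n).cartProd (completeDigraph m)).lambdaK 2 = m := by
  have hne : ((⟨0, by omega⟩, ⟨0, by omega⟩) : Fin n × Fin m) ≠ (⟨0, by omega⟩, ⟨1, by omega⟩) := by
    simp [Fin.ext_iff]
  refine Digraph.lambdaK_eq_of_forall ⟨_, Set.ncard_pair hne⟩ fun S hS => ?_
  obtain ⟨u, v, huv, rfl⟩ := Set.ncard_eq_two.mp hS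
  exact lambdaS_dirCycle_cartProd_completeDigraph (by omega) huv
end
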